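/- Let G* be the residual network of a feasible flow and suppose dist_{G*}(s,t) ≥ k. If a new flow x' is obtained by augmenting along a flow y whose support is contained in arcs lying on s-t-paths of length exactly k in G*, then in the new residual network G̃* the distance from s to t is still at least k, and every arc of G̃* lying on an s-t-path of length exactly k already lay on such a path in G*. -/

import Mathlib

/-!
Let `d` be the distance from `s` in the old residual network. An arc `(a, b)` on an `s`-`t`-path
of length `k`, with `d(t) ≥ k`, has `d(a) < d(b)`. Augmenting along `y` creates only reverses of
such arcs, so every arc of the new residual network either is an old arc (raising `d` by at most
one) or strictly lowers `d`. Hence along a new walk of length `n` from `s` the endpoint has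
`d ≤ n`, with strict inequality as soon as a new arc has been used.
-/

open Finset

noncomputable def resCap {N : ℕ} (ν x : Fin N → Fin N → ℝ) (u v : Fin N) : ℝ :=
  if u < v then ν u v - x u v else if v < u then ν u v + x v u else 0

def IsFeasibleFlow {N : ℕ} (s t : Fin N) (ν x : Fin N → Fin N → ℝ) : Prop :=
  (∀ u v : Fin N, u < v → -ν v u ≤ x u v ∧ x u v ≤ ν u v) ∧
  (∀ w : Fin N, w ≠ s → w ≠ t →
    ∑ u ∈ univ.filter (· < w), x u w = ∑ v ∈ univ.filter (w < ·), x w v)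

def IsWalk {V : Type*} (A : V → V → Prop) (k : ℕ) (f : Fin (k + 1) → V) : Prop :=
  ∀ i : Fin k, A (f i.castSucc) (f i.succ)

def WalkLen {V : Type*} (A : V → V → Prop) (k : ℕ) (u v : V) : Prop :=
  ∃ f : Fin (k + 1) → V, IsWalk A k f ∧ f 0 = u ∧ f (Fin.last k) = v

def OnPath {V : Type*} (A : V → V → Prop) (k : ℕ) (s t a b : V) : Prop :=
  ∃ f : Fin (k + 1) → V, IsWalk A k f ∧ f 0 = s ∧ f (Fin.last k) = t ∧
    ∃ i : Fin k, f i.castSucc = a ∧ f i.succ = b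

section Walks

variable {V : Type*} {A : V → V → Prop}

theorem isWalk_succ_iff {n : ℕ} {f : Fin (n + 2) → V} :
    IsWalk A (n + 1) f ↔
      IsWalk A n (Fin.init f) ∧ A (f (Fin.last n).castSucc) (f (Fin.last (n + 1))) := by
  constructor
  · exact fun hf => ⟨fun i => hf i.castSucc, hf (Fin.last n)⟩
  · rintro ⟨hinit, hlast⟩ i
    induction i using Fin.lastCases with
    | last => exact hlast
    | cast i => exact hinit i

theorem walkLen_zero_iff {u v : V} : WalkLen A 0 u v ↔ u = v :=
  ⟨fun ⟨_, _, hf0, hf⟩ => hf0.symm.trans hf, fun h => ⟨fun _ => v, finZeroElim, h.symm, rfl⟩⟩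

theorem walkLen_succ_iff {n : ℕ} {u w : V} :
    WalkLen A (n + 1) u w ↔ ∃ v, WalkLen A n u v ∧ A v w := by
  constructor
  · rintro ⟨f, hf, hf0, hfw⟩
    obtain ⟨hinit, hlast⟩ := isWalk_succ_iff.mp hf
    exact ⟨_, ⟨Fin.init f, hinit, hf0, rfl⟩, hfw ▸ hlast⟩
  · rintro ⟨v, ⟨g, hg, hg0, hgv⟩, hvw⟩
    refine ⟨Fin.snoc g w, isWalk_succ_iff.mpr ⟨?_, ?_⟩, ?_, Fin.snoc_last ..⟩
    · rwa [Fin.init_snoc]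
    · rwa [Fin.snoc_castSucc, Fin.snoc_last, hgv]
    · rw [← Fin.castSucc_zero, Fin.snoc_castSucc, hg0]

theorem WalkLen.append {m n : ℕ} {u v w : V} (h₁ : WalkLen A m u v) (h₂ : WalkLen A n v w) :
    WalkLen A (m + n) u w := by
  induction n generalizing w with
  | zero => rwa [← walkLen_zero_iff.mp h₂]
  | succ n ih =>
    obtain ⟨w', hw', hw'w⟩ := walkLen_succ_iff.mp h₂
    exact walkLen_succ_iff.mpr ⟨w', ih hw', hw'w⟩

theorem IsWalk.walkLen_sub {k : ℕ} {f : Fin (k + 1) → V} (hf : IsWalk A k f)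
    {p q : Fin (k + 1)} (hpq : p ≤ q) : WalkLen A (q - p : ℕ) (f p) (f q) := by
  have hpq : (p : ℕ) ≤ q := hpq
  refine ⟨fun r => f ⟨p + r, by omega⟩, fun r => ?_, rfl, ?_⟩
  · convert hf ⟨p + r, by omega⟩ using 2 <;> simp [add_assoc]
  · simp only [Fin.val_last]
    congr
    omega

/-- Followed by the tail of the path from `b`, a walk to `b` reaches `t`, so it is longer than
the head of the path up to `a`. -/
theorem OnPath.exists_walkLen_lt {k m : ℕ} {s t a b : V} (hdist : ∀ j < k, ¬ WalkLen A j s t)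
    (h : OnPath A k s t a b) (hm : WalkLen A m s b) : ∃ i < m, WalkLen A i s a := by
  obtain ⟨f, hf, hf0, hft, i, hia, hib⟩ := h
  have hprefix := hf.walkLen_sub (Fin.zero_le i.castSucc)
  have hsuffix := hf.walkLen_sub (Fin.le_last i.succ)
  rw [hf0, hia] at hprefix
  rw [hib, hft] at hsuffix
  refine ⟨i, ?_, by simpa using hprefix⟩
  by_contra! him
  exact hdist _ (by simp; omega) (hm.append hsuffix)

theorem IsWalk.exists_walkLen_le {A' : V → V → Prop} {k : ℕ} {s t : V}
    (hdist : ∀ j < k, ¬ WalkLen A j s t) (hnew : ∀ u v, A' u v → A u v ∨ OnPath A k s t v u)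
    {n : ℕ} {f : Fin (n + 1) → V} (hf : IsWalk A' n f) (hf0 : f 0 = s) :
    ∃ m ≤ n, WalkLen A m s (f (Fin.last n)) ∧ (IsWalk A n f ∨ m < n) := by
  induction n with
  | zero => exact ⟨0, le_rfl, walkLen_zero_iff.mpr hf0.symm, Or.inl finZeroElim⟩
  | succ n ih =>
    obtain ⟨hinit, hlast⟩ := isWalk_succ_iff.mp hf
    obtain ⟨m, hmn, hm, hold⟩ := ih hinit hf0
    rcases hnew _ _ hlast with harc | hrev
    · refine ⟨m + 1, by omega, walkLen_succ_iff.mpr ⟨_, hm, harc⟩, ?_⟩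
      exact hold.imp (fun h => isWalk_succ_iff.mpr ⟨h, harc⟩) (by omega)
    · obtain ⟨i, him, hi⟩ := hrev.exists_walkLen_lt hdist hm
      exact ⟨i, by omega, hi, Or.inr (by omega)⟩

end Walks

theorem pos_resCap_or_pos_of_augment {N : ℕ} {ν x y : Fin N → Fin N → ℝ}
    (hy : ∀ u v, 0 ≤ y u v) {u v : Fin N}
    (h : 0 < resCap ν (fun a b => x a b + y a b - y b a) u v) :
    0 < resCap ν x u v ∨ 0 < y v u := by
  by_contra! hc
  have hyvu : y v u = 0 := le_antisymm hc.2 (hy v u)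
  have hyuv := hy u v
  unfold resCap at h hc
  rcases lt_trichotomy u v with huv | rfl | hvu
  · simp only [if_pos huv] at h hc
    linarith
  · simp at h
  · simp only [if_neg (not_lt.mpr hvu.le), if_pos hvu] at h hc
    linarith

theorem augment_along_shortest_paths_general (N k : ℕ) (s t : Fin N)
    (ν : Fin N → Fin N → ℝ)
    (x : Fin N → Fin N → ℝ)
    (hdist : ∀ j < k, ¬ WalkLen (fun u v => 0 < resCap ν x u v) j s t)
    (y : Fin N → Fin N → ℝ)
    (hycap : ∀ u v : Fin N, 0 ≤ y u v ∧ y u v ≤ resCap ν x u v)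
    (hsupp : ∀ u v : Fin N, 0 < y u v →
      OnPath (fun a b => 0 < resCap ν x a b) k s t u v) :
    let x' : Fin N → Fin N → ℝ := fun u v => x u v + y u v - y v u
    let A' : Fin N → Fin N → Prop := fun u v => 0 < resCap ν x' u v
    (∀ j < k, ¬ WalkLen A' j s t) ∧
    (∀ a b : Fin N, OnPath A' k s t a b →
      OnPath (fun u v => 0 < resCap ν x u v) k s t a b) := by
  intro x' A'
  have hnew (u v : Fin N) (h : A' u v) :
      0 < resCap ν x u v ∨ OnPath (fun a b => 0 < resCap ν x a b) k s t v u :=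
    (pos_resCap_or_pos_of_augment (fun a b => (hycap a b).1) h).imp_right (hsupp v u)
  refine ⟨fun j hjk ⟨f, hf, hf0, hft⟩ => ?_, fun a b ⟨f, hf, hf0, hft, i, hia, hib⟩ => ?_⟩
  · obtain ⟨m, hmj, hm, -⟩ := hf.exists_walkLen_le hdist hnew hf0
    exact hdist m (by omega) (hft ▸ hm)
  · obtain ⟨m, -, hm, hfold | hmk⟩ := hf.exists_walkLen_le hdist hnew hf0
    · exact ⟨f, hfold, hf0, hft, i, hia, hib⟩
    · exact absurd (hft ▸ hm) (hdist m hmk)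

/-- Claim 11 of the paper (distance monotonicity under shortest-path augmentation):
if the residual distance from `s` to `t` is at least `k` and the flow is augmented
along a flow `y` supported on arcs of `s`-`t`-paths of length exactly `k` in the
residual network, then in the new residual network the distance from `s` to `t` is
still at least `k`, and every arc on an `s`-`t`-path of length exactly `k` in the
new residual network already lay on such a path before. -/
theorem augment_along_shortest_paths (N k : ℕ) (s t : Fin N)
    (ν : Fin N → Fin N → ℝ) (hν : ∀ u v, 0 ≤ ν u v)
    (x : Fin N → Fin N → ℝ) (hx : IsFeasibleFlow s t ν x)
    (hdist : ∀ j < k, ¬ WalkLen (fun u v => 0 < resCap ν x u v) j s t)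
    (y : Fin N → Fin N → ℝ)
    (hycap : ∀ u v : Fin N, 0 ≤ y u v ∧ y u v ≤ resCap ν x u v)
    (hycons : ∀ w : Fin N, w ≠ s → w ≠ t → ∑ u, y u w = ∑ v, y w v)
    (hsupp : ∀ u v : Fin N, 0 < y u v →
      OnPath (fun a b => 0 < resCap ν x a b) k s t u v) :
    let x' : Fin N → Fin N → ℝ := fun u v => x u v + y u v - y v u
    let A' : Fin N → Fin N → Prop := fun u v => 0 < resCap ν x' u v
    (∀ j < k, ¬ WalkLen A' j s t) ∧
    (∀ a b : Fin N, OnPath A' k s t a b →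
      OnPath (fun u v => 0 < resCap ν x u v) k s t a b) :=
  augment_along_shortest_paths_general N k s t ν x hdist y hycap hsupp
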